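/- Let A be a small preadditive category and let t = (T,F) be a hereditary torsion pair in Mod A. Then t is of finite type (i.e. F is closed under direct limits) if and only if there is a set S of finitely presented right A-modules such that F = S^⊥ = {X : Hom(S,X) = 0 for all S ∈ S}. -/

import Mathlib

/-!
Only `⇒` needs an argument; take `S` to be the finitely presented torsion modules. Let `X ∈ S^⊥`,
`f : Y → X` with `Y` torsion, and `x ∈ Y(a)`. Let `I ⊆ A(-, a)` be the annihilator of `x` and
`I_s ⊆ I` the subfunctor generated by a finite subset `s`. The torsion-free quotients `Z_s` of the
finitely presented modules `A(-, a)/I_s` form a direct system, whose limit is torsion-free by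
finite type. The induced map `A(-, a) → lim Z_s` kills `I`, so it factors through the submodule
of `Y` generated by `x`, which is torsion since the pair is hereditary; hence it is zero. So the
generator already dies in some `Z_s`, that is `Z_s = 0` and `A(-, a)/I_s ∈ S`. The map
`A(-, a)/I_s → X` induced by `f` therefore vanishes, and it sends the generator to `f x`.
-/
open CategoryTheory CategoryTheory.Limits Opposite
noncomputable section
universe u
variable (A : Type u) [SmallCategory A] [Preadditive A]

abbrev PMod := Aᵒᵖ ⥤ AddCommGrpCat.{u}

def Hrep (b : A) : PMod A where
  obj a := AddCommGrpCat.of (unop a ⟶ b)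
  map f := AddCommGrpCat.ofHom (AddMonoidHom.mk' (fun g => f.unop ≫ g)
    (fun g h => Preadditive.comp_add _ _ _ _ _ _))
  map_id a := by ext g; simp
  map_comp f g := by
    ext h
    show (f ≫ g).unop ≫ h = g.unop ≫ f.unop ≫ h
    simp

def toH {a b : A} (γ : a ⟶ b) : ((Hrep A b).obj (op a)) := γ

def Hmap {b b' : A} (r : b ⟶ b') : Hrep A b ⟶ Hrep A b' where
  app a := AddCommGrpCat.ofHom (AddMonoidHom.mk' (fun g => g ≫ r)
    (fun g h => Preadditive.add_comp _ _ _ _ _ _))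
  naturality a a' f := by
    ext g
    show (f.unop ≫ g) ≫ r = f.unop ≫ g ≫ r
    exact Category.assoc _ _ _

def inSub {M : PMod A} (R : Subobject M) {a : A} (x : M.obj (op a)) : Prop :=
  ∃ y, R.arrow.app (op a) y = x


def IsTorsionPair (T F : Set (PMod A)) : Prop :=
  T = {X | X.Additive ∧ ∀ Y ∈ F, ∀ f : X ⟶ Y, f = 0} ∧
  F = {X | X.Additive ∧ ∀ Y ∈ T, ∀ f : Y ⟶ X, f = 0} ∧
  ∀ X : PMod A, X.Additive →
    ∃ (Z : PMod A) (p : X ⟶ Z), Z ∈ F ∧ Epi p ∧ kernel p ∈ T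

/-- The torsion-free class is closed under direct limits. -/
def ClosedUnderDirectLimits (F : Set (PMod A)) : Prop :=
  ∀ (J : Type u) [SmallCategory J] [IsFiltered J] (D : J ⥤ PMod A),
    (∀ j, D.obj j ∈ F) → colimit D ∈ F

/-- `M` is finitely presented: `Hom_A(M, -)` commutes with direct limits of modules. -/
def FinPresented (M : PMod A) : Prop :=
  M.Additive ∧
  ∀ (J : Type u) [SmallCategory J] [IsFiltered J] (D : J ⥤ PMod A),
    (∀ j, (D.obj j).Additive) →
    Nonempty (IsColimit ((coyoneda.obj (op M)).mapCocone (colimit.cocone D)))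

set_option linter.unusedSectionVars false

section Representable
variable {A}

lemma hrep_additive (a : A) : (Hrep A a).Additive where
  map_add {_ _ f g} := by
    ext h
    exact Preadditive.add_comp _ _ _ f.unop g.unop h

lemma hrep_map_toH {a b c : A} (f : b ⟶ c) (g : c ⟶ a) :
    (Hrep A a).map f.op (toH A g) = toH A (f ≫ g) := rfl

lemma hmap_app_toH {b b' c : A} (r : b ⟶ b') (g : c ⟶ b) :
    (Hmap A r).app (op c) (toH A g) = toH A (g ≫ r) := rfl

lemma hrep_hom_app {a : A} {X : PMod A} (η : Hrep A a ⟶ X) {c : A} (g : c ⟶ a) :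
    η.app (op c) (toH A g) = X.map g.op (η.app (op a) (toH A (𝟙 a))) := by
  rw [← NatTrans.naturality_apply, hrep_map_toH, Category.comp_id]

lemma hrep_hom_ext {a : A} {X : PMod A} {η θ : Hrep A a ⟶ X}
    (h : η.app (op a) (toH A (𝟙 a)) = θ.app (op a) (toH A (𝟙 a))) : η = θ := by
  ext ⟨c⟩ g
  exact (hrep_hom_app η g).trans ((congrArg _ h).trans (hrep_hom_app θ g).symm)

lemma hrep_hom_eq_zero_iff {a : A} {X : PMod A} (η : Hrep A a ⟶ X) :
    η = 0 ↔ η.app (op a) (toH A (𝟙 a)) = 0 :=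
  ⟨fun h => by rw [h]; rfl, fun h => hrep_hom_ext (h.trans rfl)⟩

def elemHom {a : A} {X : PMod A} (hX : X.Additive) (x : X.obj (op a)) : Hrep A a ⟶ X where
  app c := AddCommGrpCat.ofHom
    { toFun := fun g : unop c ⟶ a => X.map g.op x
      map_zero' := by simp
      map_add' := fun g g' => by simp [op_add, hX.map_add] }
  naturality c c' f := by
    ext (g : unop c ⟶ a)
    change X.map (f.unop ≫ g).op x = X.map f (X.map g.op x)
    rw [op_comp, Quiver.Hom.op_unop, X.map_comp]
    rfl

lemma elemHom_app {a : A} {X : PMod A} (hX : X.Additive) (x : X.obj (op a)) {c : A}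
    (g : c ⟶ a) : (elemHom hX x).app (op c) (toH A g) = X.map g.op x := rfl

lemma elemHom_app_id {a : A} {X : PMod A} (hX : X.Additive) (x : X.obj (op a)) :
    (elemHom hX x).app (op a) (toH A (𝟙 a)) = x := by
  simp [elemHom_app]

lemma hmap_comp_eq_zero_iff {c a : A} (r : c ⟶ a) {W : PMod A} (θ : Hrep A a ⟶ W) :
    Hmap A r ≫ θ = 0 ↔ θ.app (op c) (toH A r) = 0 := by
  have key : (Hmap A r ≫ θ).app (op c) (toH A (𝟙 c)) = θ.app (op c) (toH A r) := by
    rw [NatTrans.comp_app, ConcreteCategory.comp_apply, hmap_app_toH, Category.id_comp]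
  rw [hrep_hom_eq_zero_iff, key]

lemma additive_of_jointly_surjective {ι : Type*} {X : PMod A} (P : ι → PMod A)
    (hP : ∀ i, (P i).Additive) (q : ∀ i, P i ⟶ X)
    (hsurj : ∀ (c : Aᵒᵖ) (x : X.obj c), ∃ i y, (q i).app c y = x) : X.Additive where
  map_add {c c' f g} := by
    ext x
    obtain ⟨i, y, rfl⟩ := hsurj c x
    rw [AddCommGrpCat.hom_add, AddMonoidHom.add_apply, ← NatTrans.naturality_apply,
      ← NatTrans.naturality_apply, ← NatTrans.naturality_apply, (hP i).map_add]
    exact map_add _ _ _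

end Representable

section FilteredColimit
variable {A} {J : Type u} [SmallCategory J] [IsFiltered J] (D : J ⥤ PMod A)

def isColimitEvaluation (c : Aᵒᵖ) :
    IsColimit (((evaluation Aᵒᵖ AddCommGrpCat).obj c).mapCocone (colimit.cocone D)) :=
  isColimitOfPreserves _ (colimit.isColimit D)

lemma colimit_exists_rep {c : Aᵒᵖ} (x : (colimit D).obj c) :
    ∃ (j : J) (y : (D.obj j).obj c), (colimit.ι D j).app c y = x :=
  Concrete.isColimit_exists_rep _ (isColimitEvaluation D c) x

lemma colimit_exists_of_rep_eq {c : Aᵒᵖ} {i j : J} (x : (D.obj i).obj c) (y : (D.obj j).obj c)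
    (h : (colimit.ι D i).app c x = (colimit.ι D j).app c y) :
    ∃ (k : J) (f : i ⟶ k) (g : j ⟶ k), (D.map f).app c x = (D.map g).app c y :=
  Concrete.isColimit_exists_of_rep_eq _ (isColimitEvaluation D c) x y h

lemma colimit_rep_eq_zero {c : Aᵒᵖ} {j : J} (y : (D.obj j).obj c)
    (hy : (colimit.ι D j).app c y = 0) :
    ∃ (k : J) (f : j ⟶ k), (D.map f).app c y = 0 := by
  obtain ⟨k, f, g, hfg⟩ :=
    colimit_exists_of_rep_eq D y (0 : (D.obj j).obj c) (by rw [hy, map_zero])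
  exact ⟨k, f, by rw [hfg, map_zero]⟩

lemma colimit_rep_eq_zero_of_finset {ι : Type*} (s : Finset ι) {j : J} (c : ι → Aᵒᵖ)
    (y : ∀ i, (D.obj j).obj (c i)) (hy : ∀ i ∈ s, (colimit.ι D j).app (c i) (y i) = 0) :
    ∃ (k : J) (f : j ⟶ k), ∀ i ∈ s, (D.map f).app (c i) (y i) = 0 := by
  classical
  induction s using Finset.induction_on with
  | empty => exact ⟨j, 𝟙 j, by simp⟩
  | insert i₀ s _ ih =>
    obtain ⟨k, f, hf⟩ := ih fun i hi => hy i (Finset.mem_insert_of_mem hi)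
    have hk : (colimit.ι D k).app (c i₀) ((D.map f).app (c i₀) (y i₀)) = 0 := by
      rw [← ConcreteCategory.comp_apply, ← NatTrans.comp_app, colimit.w]
      exact hy i₀ (Finset.mem_insert_self i₀ s)
    obtain ⟨k', g, hg⟩ := colimit_rep_eq_zero D _ hk
    refine ⟨k', f ≫ g, fun i hi => ?_⟩
    rw [D.map_comp, NatTrans.comp_app, ConcreteCategory.comp_apply]
    rcases Finset.mem_insert.mp hi with rfl | hi
    · exact hg
    · rw [hf i hi, map_zero]

lemma colimit_additive (hD : ∀ j, (D.obj j).Additive) : (colimit D).Additive :=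
  additive_of_jointly_surjective D.obj hD (colimit.ι D) fun _ x => colimit_exists_rep D x

end FilteredColimit

attribute [local instance] Abelian.hasFiniteBiproducts

section Presentation
variable {A} {a : A} {ι : Type*} (z : ι → Σ c : A, c ⟶ a)

-- `relQuot z s` below is `A(-, a)` modulo the subfunctor generated by the `z i`, `i ∈ s`.
def relations (s : Finset ι) : (⨁ fun i : s => Hrep A (z i).1) ⟶ Hrep A a :=
  biproduct.desc fun i => Hmap A (z i).2

lemma relations_comp_eq_zero_iff (s : Finset ι) {W : PMod A} (θ : Hrep A a ⟶ W) :
    relations z s ≫ θ = 0 ↔ ∀ i ∈ s, θ.app (op (z i).1) (toH A (z i).2) = 0 := by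
  have ι_relations (i : s) : biproduct.ι _ i ≫ relations z s = Hmap A (z i).2 :=
    biproduct.ι_desc _ _
  refine ⟨fun h i hi => ?_, fun h => biproduct.hom_ext' _ _ fun i => ?_⟩
  · rw [← hmap_comp_eq_zero_iff, ← ι_relations ⟨i, hi⟩, Category.assoc, h, comp_zero]
  · rw [← Category.assoc, ι_relations, comp_zero, hmap_comp_eq_zero_iff]
    exact h i i.2

def relQuot (s : Finset ι) : PMod A := cokernel (relations z s)

def relQuotMk (s : Finset ι) : Hrep A a ⟶ relQuot z s := cokernel.π _

instance (s : Finset ι) : Epi (relQuotMk z s) := coequalizer.π_epi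

lemma relQuotMk_app_eq_zero {s : Finset ι} {i : ι} (hi : i ∈ s) :
    (relQuotMk z s).app (op (z i).1) (toH A (z i).2) = 0 :=
  (relations_comp_eq_zero_iff z s _).mp (cokernel.condition _) i hi

def relQuotDesc (s : Finset ι) {W : PMod A} (θ : Hrep A a ⟶ W)
    (hθ : ∀ i ∈ s, θ.app (op (z i).1) (toH A (z i).2) = 0) : relQuot z s ⟶ W :=
  cokernel.desc _ θ ((relations_comp_eq_zero_iff z s θ).mpr hθ)

lemma relQuotMk_desc (s : Finset ι) {W : PMod A} (θ : Hrep A a ⟶ W)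
    (hθ : ∀ i ∈ s, θ.app (op (z i).1) (toH A (z i).2) = 0) :
    relQuotMk z s ≫ relQuotDesc z s θ hθ = θ :=
  cokernel.π_desc _ _ _

lemma relQuot_additive (s : Finset ι) : (relQuot z s).Additive :=
  additive_of_jointly_surjective (fun _ : Unit => Hrep A a) (fun _ => hrep_additive a)
    (fun _ => relQuotMk z s) fun _ x =>
      ⟨(), (AddCommGrpCat.epi_iff_surjective _).mp inferInstance x⟩

def relQuotMap {s s' : Finset ι} (h : s ≤ s') : relQuot z s ⟶ relQuot z s' :=
  relQuotDesc z s (relQuotMk z s') fun _ hi => relQuotMk_app_eq_zero z (h hi)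

lemma relQuotMk_map {s s' : Finset ι} (h : s ≤ s') :
    relQuotMk z s ≫ relQuotMap z h = relQuotMk z s' :=
  relQuotMk_desc _ _ _ _

def relQuotFunctor : Finset ι ⥤ PMod A where
  obj := relQuot z
  map f := relQuotMap z (leOfHom f)
  map_id s := by rw [← cancel_epi (relQuotMk z s), relQuotMk_map, Category.comp_id]
  map_comp {s _ _} _ _ := by
    rw [← cancel_epi (relQuotMk z s), ← Category.assoc, relQuotMk_map, relQuotMk_map,
      relQuotMk_map]

end Presentation

section PresentationFinPresented
variable {A} {a : A} {ι : Type*} (z : ι → Σ c : A, c ⟶ a) (s : Finset ι)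
variable {J : Type u} [SmallCategory J] [IsFiltered J] {D : J ⥤ PMod A}

lemma relQuot_hom_colimit_factors (hD : ∀ j, (D.obj j).Additive)
    (η : relQuot z s ⟶ colimit D) :
    ∃ (j : J) (g : relQuot z s ⟶ D.obj j), η = g ≫ colimit.ι D j := by
  set x := (relQuotMk z s ≫ η).app (op a) (toH A (𝟙 a))
  obtain ⟨j, y, hy⟩ := colimit_exists_rep D x
  have hyz : ∀ i ∈ s, (colimit.ι D j).app (op (z i).1) ((D.obj j).map (z i).2.op y) = 0 := by
    intro i hi
    rw [NatTrans.naturality_apply, hy, ← hrep_hom_app, NatTrans.comp_app,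
      ConcreteCategory.comp_apply, relQuotMk_app_eq_zero z hi, map_zero]
  obtain ⟨k, f, hf⟩ := colimit_rep_eq_zero_of_finset D s _ _ hyz
  set y' := (D.map f).app (op a) y
  have hθ : ∀ i ∈ s, (elemHom (hD k) y').app (op (z i).1) (toH A (z i).2) = 0 := by
    intro i hi
    rw [elemHom_app, ← NatTrans.naturality_apply]
    exact hf i hi
  refine ⟨k, relQuotDesc z s _ hθ, (cancel_epi (relQuotMk z s)).mp (hrep_hom_ext ?_)⟩
  change x = _
  rw [← Category.assoc, relQuotMk_desc, NatTrans.comp_app, ConcreteCategory.comp_apply,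
    elemHom_app_id, ← ConcreteCategory.comp_apply, ← NatTrans.comp_app, colimit.w, hy]

lemma relQuot_hom_eq_of_colimit {i j : J} (ηi : relQuot z s ⟶ D.obj i)
    (ηj : relQuot z s ⟶ D.obj j)
    (h : ηi ≫ colimit.ι D i = ηj ≫ colimit.ι D j) :
    ∃ (k : J) (f : i ⟶ k) (g : j ⟶ k), ηi ≫ D.map f = ηj ≫ D.map g := by
  set x := (relQuotMk z s).app (op a) (toH A (𝟙 a))
  have hx : (colimit.ι D i).app (op a) (ηi.app (op a) x) =
      (colimit.ι D j).app (op a) (ηj.app (op a) x) := by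
    simp only [← ConcreteCategory.comp_apply, ← NatTrans.comp_app, h]
  obtain ⟨k, f, g, hfg⟩ := colimit_exists_of_rep_eq D _ _ hx
  refine ⟨k, f, g, (cancel_epi (relQuotMk z s)).mp (hrep_hom_ext ?_)⟩
  simpa only [NatTrans.comp_app, ConcreteCategory.comp_apply] using hfg

lemma relQuot_finPresented : FinPresented A (relQuot z s) := by
  refine ⟨relQuot_additive z s, fun J _ _ D hD =>
    ⟨Types.FilteredColimit.isColimitOf _ _ ?_ ?_⟩⟩
  · exact relQuot_hom_colimit_factors z s hD
  · exact fun _ _ => relQuot_hom_eq_of_colimit z s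

end PresentationFinPresented

section QuotientFunctor
variable {J C : Type*} [Category J] [Category C] [Abelian C] (X : J ⥤ C) {Z : J → C}
  (p : ∀ j, X.obj j ⟶ Z j) [∀ j, Epi (p j)]
  (hp : ∀ ⦃j k : J⦄ (f : j ⟶ k), kernel.ι (p j) ≫ X.map f ≫ p k = 0)

def quotientFunctor : J ⥤ C where
  obj := Z
  map f := Abelian.epiDesc (p _) (X.map f ≫ p _) (hp f)
  map_id j := by rw [← cancel_epi (p j)]; simp
  map_comp {j _ _} _ _ := by rw [← cancel_epi (p j)]; simp

def toQuotientFunctor : X ⟶ quotientFunctor X p hp where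
  app := p
  naturality _ _ f := (Abelian.comp_epiDesc _ _ (hp f)).symm

end QuotientFunctor

namespace IsTorsionPair
variable {A} {T F : Set (PMod A)} (h : IsTorsionPair A T F)
include h

lemma additive_of_mem_torsion {X : PMod A} (hX : X ∈ T) : X.Additive := by
  rw [h.1] at hX
  exact hX.1

lemma hom_eq_zero {X Y : PMod A} (hX : X ∈ T) (hY : Y ∈ F) (f : X ⟶ Y) : f = 0 := by
  rw [h.1] at hX
  exact hX.2 Y hY f

lemma mem_torsion_of_eq_zero {X Z : PMod A} (hX : X.Additive) {p : X ⟶ Z}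
    (hker : kernel p ∈ T) (hp : p = 0) : X ∈ T := by
  rw [h.1]
  refine ⟨hX, fun W hW f => ?_⟩
  rw [← Category.id_comp f, ← kernel.lift_ι p (𝟙 X) (by rw [hp, comp_zero]), Category.assoc,
    h.hom_eq_zero hker hW (kernel.ι p ≫ f), comp_zero]

lemma eq_zero_of_kernel_comp_eq_zero
    (hher : ∀ (S X : PMod A) (f : S ⟶ X), Mono f → X ∈ T → S ∈ T)
    {P Y W : PMod A} (φ : P ⟶ Y) (hY : Y ∈ T) (hW : W ∈ F) (u : P ⟶ W)
    (hu : kernel.ι φ ≫ u = 0) : u = 0 := by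
  have him : image φ ∈ T := hher _ _ (image.ι φ) inferInstance hY
  have hkφ : kernel.ι (factorThruImage φ) ≫ φ = 0 := by
    simpa only [image.fac, zero_comp] using
      kernel.condition_assoc (factorThruImage φ) (image.ι φ)
  have hu' : kernel.ι (factorThruImage φ) ≫ u = 0 := by
    rw [← kernel.lift_ι φ _ hkφ, Category.assoc, hu, comp_zero]
  rw [← Abelian.comp_epiDesc _ u hu', h.hom_eq_zero him hW (Abelian.epiDesc _ _ _), comp_zero]

lemma exists_torsionFree_quotient (hcl : ClosedUnderDirectLimits A F) {J : Type u}
    [SmallCategory J] [IsFiltered J] (X : J ⥤ PMod A) (hX : ∀ j, (X.obj j).Additive) :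
    ∃ (G : J ⥤ PMod A) (α : X ⟶ G),
      (∀ j, kernel (α.app j) ∈ T) ∧ colimit G ∈ F := by
  choose Z p hZ hepi hker using fun j => h.2.2 (X.obj j) (hX j)
  have hp : ∀ ⦃j k : J⦄ (f : j ⟶ k), kernel.ι (p j) ≫ X.map f ≫ p k = 0 :=
    fun j k _ => h.hom_eq_zero (hker j) (hZ k) _
  exact ⟨quotientFunctor X p hp, toQuotientFunctor X p hp, hker, hcl _ _ hZ⟩

end IsTorsionPair

section FiniteType
variable {A} {T F : Set (PMod A)}

lemma kernel_elemHom_comp_eq_zero {Y : PMod A} (hY : Y.Additive) {a : A} (x : Y.obj (op a))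
    {W : PMod A} (u : Hrep A a ⟶ W)
    (hu : ∀ (c : A) (g : c ⟶ a), Y.map g.op x = 0 → u.app (op c) (toH A g) = 0) :
    kernel.ι (elemHom hY x) ≫ u = 0 := by
  ext ⟨c⟩ w
  have hw : Y.map ((kernel.ι (elemHom hY x)).app (op c) w).op x = 0 :=
    ConcreteCategory.congr_hom (NatTrans.congr_app (kernel.condition _) (op c)) w
  exact hu c _ hw

lemma exists_relQuot_mem_torsion (h : IsTorsionPair A T F)
    (hher : ∀ (S X : PMod A) (f : S ⟶ X), Mono f → X ∈ T → S ∈ T)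
    (hcl : ClosedUnderDirectLimits A F) {Y : PMod A} (hY : Y ∈ T) {a : A} (x : Y.obj (op a))
    {ι : Type u} (z : ι → Σ c : A, c ⟶ a)
    (hz : ∀ (c : A) (g : c ⟶ a), Y.map g.op x = 0 → ∃ i, z i = ⟨c, g⟩) :
    ∃ s : Finset ι, relQuot z s ∈ T := by
  obtain ⟨G, α, hker, hG⟩ :=
    h.exists_torsionFree_quotient hcl (relQuotFunctor z) (relQuot_additive z)
  let π (s : Finset ι) : Hrep A a ⟶ (relQuotFunctor z).obj s := relQuotMk z s
  have hπα {s t : Finset ι} (f : s ⟶ t) :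
      π s ≫ α.app s ≫ G.map f = π t ≫ α.app t := by
    rw [← α.naturality, ← Category.assoc]
    exact congrArg (· ≫ α.app t) (relQuotMk_map z (leOfHom f))
  have hπ {s t : Finset ι} (hst : s ≤ t) :
      π s ≫ α.app s ≫ colimit.ι G s = π t ≫ α.app t ≫ colimit.ι G t := by
    rw [← colimit.w G (homOfLE hst)]
    simpa only [Category.assoc] using congrArg (· ≫ colimit.ι G t) (hπα (homOfLE hst))
  have hu : π ∅ ≫ α.app ∅ ≫ colimit.ι G ∅ = 0 := by
    refine h.eq_zero_of_kernel_comp_eq_zero hher _ hY hG _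
      (kernel_elemHom_comp_eq_zero (h.additive_of_mem_torsion hY) x _ fun c g hg => ?_)
    obtain ⟨i, hi⟩ := hz c g hg
    have hzi : (π {i}).app (op (z i).1) (toH A (z i).2) = 0 :=
      relQuotMk_app_eq_zero z (Finset.mem_singleton_self i)
    rw [hi] at hzi
    rw [hπ (Finset.empty_subset {i}), NatTrans.comp_app, ConcreteCategory.comp_apply]
    exact (congrArg _ hzi).trans (map_zero _)
  set v := (π ∅ ≫ α.app ∅).app (op a) (toH A (𝟙 a))
  have hv : (colimit.ι G ∅).app (op a) v = 0 := by
    simpa only [v, NatTrans.comp_app, ConcreteCategory.comp_apply] using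
      (hrep_hom_eq_zero_iff _).mp hu
  obtain ⟨k, f, hf⟩ := colimit_rep_eq_zero G v hv
  have hk : π k ≫ α.app k = 0 := by
    rw [hrep_hom_eq_zero_iff, ← hπα f]
    simpa only [v, NatTrans.comp_app, ConcreteCategory.comp_apply] using hf
  have hαk : α.app k = 0 := (cancel_epi (relQuotMk z k)).mp (hk.trans comp_zero.symm)
  exact ⟨k, h.mem_torsion_of_eq_zero (relQuot_additive z k) (hker k) hαk⟩

lemma mem_torsionFree_of_forall_finPresented (h : IsTorsionPair A T F)
    (hher : ∀ (S X : PMod A) (f : S ⟶ X), Mono f → X ∈ T → S ∈ T)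
    (hcl : ClosedUnderDirectLimits A F) {X : PMod A} (hX : X.Additive)
    (hXT : ∀ M, FinPresented A M → M ∈ T → ∀ f : M ⟶ X, f = 0) : X ∈ F := by
  rw [h.2.1]
  refine ⟨hX, fun Y hY f => ?_⟩
  ext ⟨a⟩ x
  let z : {e : Σ c : A, c ⟶ a // Y.map e.2.op x = 0} → Σ c : A, c ⟶ a := Subtype.val
  obtain ⟨s, hs⟩ :=
    exists_relQuot_mem_torsion h hher hcl hY x z fun c g hg => ⟨⟨⟨c, g⟩, hg⟩, rfl⟩
  let χ := elemHom (h.additive_of_mem_torsion hY) x ≫ f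
  have hχ : ∀ i ∈ s, χ.app (op (z i).1) (toH A (z i).2) = 0 := fun i _ => by
    rw [NatTrans.comp_app, ConcreteCategory.comp_apply, elemHom_app, i.2, map_zero]
  have hχ0 : χ = 0 := by
    rw [← relQuotMk_desc z s χ hχ, hXT _ (relQuot_finPresented z s) hs (relQuotDesc z s χ hχ),
      comp_zero]
  simpa only [χ, NatTrans.comp_app, ConcreteCategory.comp_apply, elemHom_app_id,
    NatTrans.app_zero, AddCommGrpCat.zero_apply] using (hrep_hom_eq_zero_iff χ).mp hχ0

lemma closedUnderDirectLimits_of_finPresented {S : Set (PMod A)}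
    (hS : ∀ M ∈ S, FinPresented A M) :
    ClosedUnderDirectLimits A {X | X.Additive ∧ ∀ M ∈ S, ∀ f : M ⟶ X, f = 0} := by
  intro J _ _ D hD
  refine ⟨colimit_additive D fun j => (hD j).1, fun M hM f => ?_⟩
  obtain ⟨hcol⟩ := (hS M hM).2 J D fun j => (hD j).1
  obtain ⟨j, g, rfl⟩ := Types.jointly_surjective_of_isColimit hcol f
  change g ≫ colimit.ι D j = 0
  rw [(hD j).2 M hM g, zero_comp]

end FiniteType

theorem statement7 (T F : Set (PMod A)) (h : IsTorsionPair A T F)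
    (hher : ∀ (S X : PMod A) (f : S ⟶ X), Mono f → X ∈ T → S ∈ T) :
    ClosedUnderDirectLimits A F ↔
      ∃ S : Set (PMod A), (∀ M ∈ S, FinPresented A M) ∧
        F = {X | X.Additive ∧ ∀ M ∈ S, ∀ f : M ⟶ X, f = 0} := by
  constructor
  · intro hcl
    refine ⟨{M | FinPresented A M ∧ M ∈ T}, fun M hM => hM.1, Set.Subset.antisymm ?_ ?_⟩
    · intro X hX
      rw [h.2.1] at hX
      exact ⟨hX.1, fun M hM => hX.2 M hM.2⟩
    · exact fun X hX =>
        mem_torsionFree_of_forall_finPresented h hher hcl hX.1 fun M hM hMT => hX.2 M ⟨hM, hMT⟩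
  · rintro ⟨S, hS, rfl⟩
    exact closedUnderDirectLimits_of_finPresented hS
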